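/- Let g(u) = C₁u² + C₂u + C₃ be a quadratic polynomial with real coefficients which is not identically zero, and set f(u) = g(u)². Let u(t,x) be a smooth real-valued solution of the gKN equation with f, such that u_x(t,x) ≠ 0 for all (t,x). Define T₂ᵦ(t,x) = g(u)/u_x and X₂ᵦ(t,x) = u_xxx·g(u)/u_x² − (1/2)·u_xx²·g(u)/u_x³ − 2·u_xx·g'(u)/u_x + (1/3)·g(u)³/u_x³ + 2·u_x·g''(u), where all derivatives of u are evaluated at (t,x). Then ∂_t T₂ᵦ(t,x) + ∂_x X₂ᵦ(t,x) = 0 at every point (t,x). (This is the first-order conservation law admitted by the gKN equation precisely when f is the square of a quadratic polynomial.) -/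

import Mathlib

open Real

/-- Partial derivative with respect to the second (spatial) variable. -/
noncomputable def pdx (u : ℝ → ℝ → ℝ) : ℝ → ℝ → ℝ := fun t x => deriv (fun y => u t y) x

/-- Partial derivative with respect to the first (time) variable. -/
noncomputable def pdt (u : ℝ → ℝ → ℝ) : ℝ → ℝ → ℝ := fun t x => deriv (fun s => u s x) t

/-- `u` solves the generalized Krichever-Novikov equation with nonlinearity `f`:
`u_t = u_xxx - (3/2) u_xx^2/u_x + f(u)/u_x`. -/
def isGKN (f : ℝ → ℝ) (u : ℝ → ℝ → ℝ) : Prop :=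
  ∀ t x, pdt u t x =
    pdx (pdx (pdx u)) t x - (3/2) * (pdx (pdx u) t x)^2 / pdx u t x + f (u t x) / pdx u t x

/-- A conservation law: `∂_t T + ∂_x X = 0` at every point. -/
def consLaw (T X : ℝ → ℝ → ℝ) : Prop := ∀ t x, pdt T t x + pdx X t x = 0


/-! Differentiating `T₂ᵦ` in `t` brings in `u_t` and `u_tx`; the equation gives `u_t`, and its
`x`-derivative gives `u_tx = ∂ₓ(u_t)` by symmetry of second derivatives. After this substitution,
`∂ₜ T₂ᵦ + ∂ₓ X₂ᵦ` collapses to `2 u_x² g'''(u)` for every three times differentiable `g`, which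
vanishes when `g` is quadratic. -/

open Function

section PartialDerivatives

variable {u : ℝ → ℝ → ℝ}

theorem hasDerivAt_slice_right_of_differentiableAt {t x : ℝ}
    (hu : DifferentiableAt ℝ (uncurry u) (t, x)) :
    HasDerivAt (fun y => u t y) (fderiv ℝ (uncurry u) (t, x) (0, 1)) x :=
  hu.hasFDerivAt.comp_hasDerivAt x ((hasDerivAt_const x t).prodMk (hasDerivAt_id' x))

theorem hasDerivAt_slice_left_of_differentiableAt {t x : ℝ}
    (hu : DifferentiableAt ℝ (uncurry u) (t, x)) :
    HasDerivAt (fun s => u s x) (fderiv ℝ (uncurry u) (t, x) (1, 0)) t :=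
  have hline : HasDerivAt (fun s : ℝ => (s, x)) ((1 : ℝ), (0 : ℝ)) t :=
    (hasDerivAt_id' t).prodMk (hasDerivAt_const t x)
  (hu.hasFDerivAt.comp_hasDerivAt t hline :)

theorem hasDerivAt_pdx (hu : Differentiable ℝ (uncurry u)) (t x : ℝ) :
    HasDerivAt (fun y => u t y) (pdx u t x) x :=
  (hasDerivAt_slice_right_of_differentiableAt (hu (t, x))).differentiableAt.hasDerivAt

theorem hasDerivAt_pdt (hu : Differentiable ℝ (uncurry u)) (t x : ℝ) :
    HasDerivAt (fun s => u s x) (pdt u t x) t :=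
  (hasDerivAt_slice_left_of_differentiableAt (hu (t, x))).differentiableAt.hasDerivAt

theorem uncurry_pdx (hu : Differentiable ℝ (uncurry u)) :
    uncurry (pdx u) = fun p => fderiv ℝ (uncurry u) p (0, 1) :=
  funext fun p => (hasDerivAt_slice_right_of_differentiableAt (hu p)).deriv

theorem uncurry_pdt (hu : Differentiable ℝ (uncurry u)) :
    uncurry (pdt u) = fun p => fderiv ℝ (uncurry u) p (1, 0) :=
  funext fun p => (hasDerivAt_slice_left_of_differentiableAt (hu p)).deriv

theorem contDiff_pdx {m n : WithTop ℕ∞} (hu : ContDiff ℝ n (uncurry u)) (hmn : m + 1 ≤ n) :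
    ContDiff ℝ m (uncurry (pdx u)) := by
  rw [uncurry_pdx ((hu.of_le (le_add_self.trans hmn)).differentiable one_ne_zero)]
  exact (hu.fderiv_right hmn).clm_apply contDiff_const

theorem contDiff_pdt {m n : WithTop ℕ∞} (hu : ContDiff ℝ n (uncurry u)) (hmn : m + 1 ≤ n) :
    ContDiff ℝ m (uncurry (pdt u)) := by
  rw [uncurry_pdt ((hu.of_le (le_add_self.trans hmn)).differentiable one_ne_zero)]
  exact (hu.fderiv_right hmn).clm_apply contDiff_const

theorem contDiff_top_pdx (hu : ContDiff ℝ (⊤ : ℕ∞) (uncurry u)) :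
    ContDiff ℝ (⊤ : ℕ∞) (uncurry (pdx u)) :=
  contDiff_pdx hu (by norm_num)

theorem pdt_pdx_comm (hu : ContDiff ℝ 2 (uncurry u)) (t x : ℝ) :
    pdt (pdx u) t x = pdx (pdt u) t x := by
  have hD : Differentiable ℝ (fderiv ℝ (uncurry u)) :=
    (hu.fderiv_right (m := 1) le_rfl).differentiable one_ne_zero
  have hsecond : ∀ v w : ℝ × ℝ, fderiv ℝ (fun p => fderiv ℝ (uncurry u) p v) (t, x) w
      = fderiv ℝ (fderiv ℝ (uncurry u)) (t, x) w v := fun v w => by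
    rw [fderiv_clm_apply (hD (t, x)) (differentiableAt_const v)]
    simp
  have hdiff : Differentiable ℝ (uncurry u) := hu.differentiable two_ne_zero
  have hpdx : Differentiable ℝ (uncurry (pdx u)) :=
    (contDiff_pdx (m := 1) hu le_rfl).differentiable one_ne_zero
  have hpdt : Differentiable ℝ (uncurry (pdt u)) :=
    (contDiff_pdt (m := 1) hu le_rfl).differentiable one_ne_zero
  rw [pdt, pdx, (hasDerivAt_slice_left_of_differentiableAt (hpdx (t, x))).deriv,
    (hasDerivAt_slice_right_of_differentiableAt (hpdt (t, x))).deriv,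
    uncurry_pdx hdiff, uncurry_pdt hdiff, hsecond, hsecond]
  exact (hu.contDiffAt.isSymmSndFDerivAt (by simp)).eq (1, 0) (0, 1)

end PartialDerivatives

section GKN

variable {u : ℝ → ℝ → ℝ} {f : ℝ → ℝ}

theorem isGKN.pdt_pdx_eq (hsol : isGKN f u) (hu : ContDiff ℝ (⊤ : ℕ∞) (uncurry u)) {t x f' : ℝ}
    (hux : pdx u t x ≠ 0) (hf : HasDerivAt f f' (u t x)) :
    pdt (pdx u) t x = pdx (pdx (pdx (pdx u))) t x
      - 3 * pdx (pdx u) t x * pdx (pdx (pdx u)) t x / pdx u t x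
      + (3 / 2) * pdx (pdx u) t x ^ 3 / pdx u t x ^ 2
      + f' - f (u t x) * pdx (pdx u) t x / pdx u t x ^ 2 := by
  have hu1 := contDiff_top_pdx hu
  have hu2 := contDiff_top_pdx hu1
  have hx0 := hasDerivAt_pdx (hu.differentiable (by simp)) t x
  have hx1 := hasDerivAt_pdx (hu1.differentiable (by simp)) t x
  have hx2 := hasDerivAt_pdx (hu2.differentiable (by simp)) t x
  have hx3 := hasDerivAt_pdx ((contDiff_top_pdx hu2).differentiable (by simp)) t x
  have hrhs := (hx3.sub (((hx2.pow 2).const_mul (3 / 2)).div hx1 hux)).add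
    ((hf.comp x hx0).div hx1 hux)
  rw [pdt_pdx_comm (hu.of_le (WithTop.coe_le_coe.mpr le_top)), pdx,
    show pdt u = _ from funext fun s => funext (hsol s)]
  refine (hrhs.congr_deriv ?_).deriv
  simp only [Pi.pow_apply, comp_apply]
  field_simp
  ring

end GKN

section ConservationLaw

noncomputable def densityT2b (g : ℝ → ℝ) (u : ℝ → ℝ → ℝ) : ℝ → ℝ → ℝ :=
  fun t x => g (u t x) / pdx u t x

noncomputable def fluxX2b (g : ℝ → ℝ) (u : ℝ → ℝ → ℝ) : ℝ → ℝ → ℝ := fun t x =>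
  (pdx (pdx (pdx u)) t x) * (g (u t x)) / (pdx u t x)^2
    - (1/2) * (pdx (pdx u) t x)^2 * (g (u t x)) / (pdx u t x)^3
    - 2 * (pdx (pdx u) t x) * (deriv g (u t x)) / (pdx u t x)
    + (1/3) * (g (u t x))^3 / (pdx u t x)^3
    + 2 * (pdx u t x) * (deriv (deriv g) (u t x))

variable {g : ℝ → ℝ} {u : ℝ → ℝ → ℝ}

theorem pdt_densityT2b_add_pdx_fluxX2b (hg : Differentiable ℝ g) (hg' : Differentiable ℝ (deriv g))
    (hg'' : Differentiable ℝ (deriv (deriv g))) (hu : ContDiff ℝ (⊤ : ℕ∞) (uncurry u))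
    (hsol : isGKN (fun v => g v ^ 2) u) {t x : ℝ} (hux : pdx u t x ≠ 0) :
    pdt (densityT2b g u) t x + pdx (fluxX2b g u) t x
      = 2 * pdx u t x ^ 2 * deriv (deriv (deriv g)) (u t x) := by
  have hu1 := contDiff_top_pdx hu
  have hu2 := contDiff_top_pdx hu1
  have hx0 := hasDerivAt_pdx (hu.differentiable (by simp)) t x
  have hx1 := hasDerivAt_pdx (hu1.differentiable (by simp)) t x
  have hx2 := hasDerivAt_pdx (hu2.differentiable (by simp)) t x
  have hx3 := hasDerivAt_pdx ((contDiff_top_pdx hu2).differentiable (by simp)) t x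
  have ht0 := hasDerivAt_pdt (hu.differentiable (by simp)) t x
  have ht1 := hasDerivAt_pdt (hu1.differentiable (by simp)) t x
  have hgx := (hg (u t x)).hasDerivAt.comp x hx0
  have hg'x := (hg' (u t x)).hasDerivAt.comp x hx0
  have hg''x := (hg'' (u t x)).hasDerivAt.comp x hx0
  have hT : pdt (densityT2b g u) t x = _ :=
    (((hg (u t x)).hasDerivAt.comp t ht0).div ht1 hux).deriv
  have hflux := (((((hx3.mul hgx).div (hx1.pow 2) (pow_ne_zero 2 hux)).sub
      ((((hx2.pow 2).const_mul (1/2)).mul hgx).div (hx1.pow 3) (pow_ne_zero 3 hux))).sub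
      (((hx2.const_mul 2).mul hg'x).div hx1 hux)).add
      (((hgx.pow 3).const_mul (1/3)).div (hx1.pow 3) (pow_ne_zero 3 hux))).add
      ((hx1.const_mul 2).mul hg''x)
  have hX : pdx (fluxX2b g u) t x = _ := hflux.deriv
  rw [hT, hX, hsol t x, hsol.pdt_pdx_eq hu hux ((hg (u t x)).hasDerivAt.pow 2)]
  simp only [Pi.pow_apply, Pi.mul_apply, comp_apply]
  field_simp
  ring

end ConservationLaw

theorem deriv_affine (a b : ℝ) : deriv (fun v : ℝ => a * v + b) = fun _ => a := by
  funext v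
  simp

theorem deriv_quadratic (a b c : ℝ) :
    deriv (fun v : ℝ => a * v ^ 2 + b * v + c) = fun v => 2 * a * v + b := by
  funext v
  have h := (((hasDerivAt_pow 2 v).const_mul a).add ((hasDerivAt_id' v).const_mul b)).add_const c
  exact h.deriv.trans (by ring)

theorem gKN_conservation_law_T2b_general (C₁ C₂ C₃ : ℝ)
    (g : ℝ → ℝ) (hg : ∀ v, g v = C₁ * v^2 + C₂ * v + C₃)
    (u : ℝ → ℝ → ℝ) (hu : ContDiff ℝ (⊤ : ℕ∞) (Function.uncurry u))
    (hux : ∀ t x, pdx u t x ≠ 0)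
    (hsol : isGKN (fun v => (g v)^2) u) :
    consLaw (fun t x => (g (u t x)) / (pdx u t x))
      (fun t x =>
        (pdx (pdx (pdx u)) t x) * (g (u t x)) / (pdx u t x)^2 - (1/2) * (pdx (pdx u) t x)^2 * (g (u t x)) / (pdx u t x)^3
          - 2 * (pdx (pdx u) t x) * (deriv g (u t x)) / (pdx u t x) + (1/3) * (g (u t x))^3 / (pdx u t x)^3
          + 2 * (pdx u t x) * (deriv (deriv g) (u t x))) := by
  have hg_eq : g = fun v => C₁ * v ^ 2 + C₂ * v + C₃ := funext hg
  have hg' : deriv g = fun v => 2 * C₁ * v + C₂ := hg_eq ▸ deriv_quadratic C₁ C₂ C₃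
  have hg'' : deriv (deriv g) = fun _ => 2 * C₁ := by rw [hg', deriv_affine]
  intro t x
  have hbalance := pdt_densityT2b_add_pdx_fluxX2b (hg_eq ▸ by fun_prop) (hg' ▸ by fun_prop)
    (hg'' ▸ by fun_prop) hu hsol (hux t x)
  rwa [hg'', deriv_const', mul_zero] at hbalance

/-- The first-order conservation law `(T₂ᵦ, X₂ᵦ)` of the gKN equation with
`f = g²`, `g` a nonzero quadratic polynomial. -/
theorem gKN_conservation_law_T2b (C₁ C₂ C₃ : ℝ) (hg0 : ¬ (C₁ = 0 ∧ C₂ = 0 ∧ C₃ = 0))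
    (g : ℝ → ℝ) (hg : ∀ v, g v = C₁ * v^2 + C₂ * v + C₃)
    (u : ℝ → ℝ → ℝ) (hu : ContDiff ℝ (⊤ : ℕ∞) (Function.uncurry u))
    (hux : ∀ t x, pdx u t x ≠ 0)
    (hsol : isGKN (fun v => (g v)^2) u) :
    consLaw (fun t x => (g (u t x)) / (pdx u t x))
      (fun t x =>
        (pdx (pdx (pdx u)) t x) * (g (u t x)) / (pdx u t x)^2 - (1/2) * (pdx (pdx u) t x)^2 * (g (u t x)) / (pdx u t x)^3
          - 2 * (pdx (pdx u) t x) * (deriv g (u t x)) / (pdx u t x) + (1/3) * (g (u t x))^3 / (pdx u t x)^3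
          + 2 * (pdx u t x) * (deriv (deriv g) (u t x))) :=
  gKN_conservation_law_T2b_general C₁ C₂ C₃ g hg u hu hux hsol
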